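/- arXiv:math/0702293 — 4 statements merged into one kernel-verified Lean document; each statement's English description precedes it below -/
import Mathlib

section
/- Let A and B be abelian groups. If Ext^1_ℤ(A, B*) = 0 and B* ≠ 0, where B* = Hom(B, ℤ), then A is a Whitehead group. -/
open CategoryTheory

/-- `Ext1 A C` is the abelian group `Ext¹_ℤ(A, C)` (as a type), computed in the
category of `ℤ`-modules, i.e. abelian groups. -/
noncomputable abbrev Ext1 (A C : Type) [AddCommGroup A] [AddCommGroup C] : Type _ :=
  ((Ext ℤ (ModuleCat.{0} ℤ) 1).obj (Opposite.op (ModuleCat.of ℤ A))).obj (ModuleCat.of ℤ C)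

/-- An abelian group `A` is a Whitehead group if `Ext¹_ℤ(A, ℤ) = 0`. -/
def IsWhitehead (A : Type) [AddCommGroup A] : Prop := Subsingleton (Ext1 A ℤ)

/-!
A nonzero `f : B →+ ℤ` has some `f b ≠ 0`, so evaluation at `b` is a nonzero map `B* →+ ℤ`.
Dividing it by a generator of its image gives a map `B* →+ ℤ` that hits `1`, so `ℤ` is a
retract of `B*`. The functor `Ext¹(A, -)` preserves retracts, hence `Ext¹(A, ℤ)` is a retract
of the trivial group `Ext¹(A, B*)`.
-/

theorem AddMonoidHom.exists_apply_eq_one_of_ne_zero {M : Type*} [AddCommGroup M] {φ : M →+ ℤ}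
    (hφ : φ ≠ 0) : ∃ (ψ : M →+ ℤ) (x : M), ψ x = 1 := by
  obtain ⟨m, hm⟩ := Int.subgroup_cyclic φ.range
  rw [← AddSubgroup.zmultiples_eq_closure] at hm
  have hdvd (y : M) : m ∣ φ y :=
    Int.mem_zmultiples_iff.mp (hm ▸ AddMonoidHom.mem_range.mpr ⟨y, rfl⟩)
  obtain ⟨x, hx⟩ : m ∈ φ.range := hm ▸ AddSubgroup.mem_zmultiples m
  have hm0 : m ≠ 0 := by
    rintro rfl
    exact hφ (AddMonoidHom.ext fun y => zero_dvd_iff.mp (hdvd y))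
  refine ⟨AddMonoidHom.mk' (fun y => φ y / m) fun y z => ?_, x, ?_⟩
  · rw [map_add, Int.add_ediv_of_dvd_left (hdvd y)]
  · simp [hx, hm0]

def ModuleCat.intRetractOfApplyEqOne {M : Type} [AddCommGroup M] (ψ : M →+ ℤ) (x : M)
    (h : ψ x = 1) : Retract (ModuleCat.of ℤ ℤ) (ModuleCat.of ℤ M) where
  i := ModuleCat.ofHom (zmultiplesHom M x).toIntLinearMap
  r := ModuleCat.ofHom ψ.toIntLinearMap
  retract := by ext; simp [h]

theorem CategoryTheory.Retract.subsingleton {C : Type*} [Category C] {FC : C → C → Type*}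
    {CC : C → Type*} [∀ X Y, FunLike (FC X Y) (CC X) (CC Y)] [ConcreteCategory C FC] {X Y : C}
    (h : Retract X Y) [Subsingleton (CC Y)] : Subsingleton (CC X) :=
  have hri : Function.LeftInverse h.r h.i := fun x => by
    rw [← ConcreteCategory.comp_apply, h.retract, ConcreteCategory.id_apply]
  hri.injective.subsingleton

/-- If `Ext¹(A, B*) = 0` and `B* = Hom(B, ℤ)` is nonzero, then `A` is a Whitehead group. -/
theorem whitehead_of_ext_dual_eq_zero (A B : Type) [AddCommGroup A] [AddCommGroup B]
    (h1 : Subsingleton (Ext1 A (B →+ ℤ))) (h2 : ∃ f : B →+ ℤ, f ≠ 0) :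
    IsWhitehead A := by
  obtain ⟨f, hf⟩ := h2
  obtain ⟨b, hb⟩ := DFunLike.ne_iff.mp hf
  obtain ⟨ψ, x, hψx⟩ := AddMonoidHom.exists_apply_eq_one_of_ne_zero
    (φ := AddMonoidHom.eval b) (DFunLike.ne_iff.mpr ⟨f, hb⟩)
  exact ((ModuleCat.intRetractOfApplyEqOne ψ x hψx).map
    ((Ext ℤ (ModuleCat.{0} ℤ) 1).obj (Opposite.op (ModuleCat.of ℤ A)))).subsingleton
end

section
/- Let C be a nonzero separable torsion-free abelian group and let A be an abelian group with Ext^1_ℤ(A, C) = 0. Then A is a Whitehead group. -/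
open CategoryTheory

/-- A (torsion-free) abelian group `C` is separable if every finite subset of `C` is
contained in a finitely generated direct summand of `C`. -/
def IsSeparableGroup (C : Type) [AddCommGroup C] : Prop :=
  ∀ F : Finset C, ∃ S T : AddSubgroup C, S.FG ∧ (F : Set C) ⊆ S ∧ IsCompl S T

/-!
A nonzero element of `C` lies in a finitely generated direct summand, which is free (being
torsion-free) and nonzero, so `ℤ` is a direct summand of it and hence a retract of `C`.
The additive functor `Ext¹(A, -)` carries this retraction to one of `Ext¹(A, ℤ)` into
`Ext¹(A, C) = 0`.
-/

theorem Submodule.exists_retract_of_isCompl_of_free {R M : Type*} [Ring R] [AddCommGroup M]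
    [Module R M] {S T : Submodule R M} (hST : IsCompl S T) [Module.Free R S] [Nontrivial S] :
    ∃ (i : R →ₗ[R] M) (r : M →ₗ[R] R), r ∘ₗ i = LinearMap.id := by
  let b := Module.Free.chooseBasis R S
  obtain ⟨j⟩ := b.index_nonempty
  refine ⟨LinearMap.toSpanSingleton R M (b j), b.coord j ∘ₗ S.projectionOnto T hST, ?_⟩
  ext
  simp [Submodule.projectionOnto_apply_left hST (b j)]

theorem ModuleCat.subsingleton_of_retract {R : Type*} [Ring R] {X Y : ModuleCat R}
    (h : Retract X Y) [Subsingleton Y] : Subsingleton X :=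
  (Function.LeftInverse.injective (g := h.r.hom) (f := h.i.hom) <|
    ConcreteCategory.congr_hom h.retract).subsingleton

theorem IsSeparableGroup.exists_retract_int {C : Type} [AddCommGroup C] [Nontrivial C]
    [NoZeroSMulDivisors ℤ C] (hC : IsSeparableGroup C) :
    Nonempty (Retract (ModuleCat.of ℤ ℤ) (ModuleCat.of ℤ C)) := by
  obtain ⟨c, hc⟩ := exists_ne (0 : C)
  obtain ⟨S, T, hS, hcS, hST⟩ := hC {c}
  have : Module.Finite ℤ S.toIntSubmodule :=
    Module.Finite.iff_fg.mpr ((Submodule.fg_iff_addSubgroup_fg _).mpr hS)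
  have : Nontrivial S.toIntSubmodule :=
    ⟨⟨c, hcS (by simp)⟩, 0, by simpa [Subtype.ext_iff] using hc⟩
  obtain ⟨i, r, hri⟩ :=
    Submodule.exists_retract_of_isCompl_of_free (AddSubgroup.toIntSubmodule.isCompl hST)
  exact ⟨⟨ModuleCat.ofHom i, ModuleCat.ofHom r, ModuleCat.hom_ext hri⟩⟩

/-- If `C` is a nonzero separable torsion-free abelian group and `Ext¹(A, C) = 0`,
then `A` is a Whitehead group. -/
theorem whitehead_of_ext_separable_eq_zero (A C : Type) [AddCommGroup A] [AddCommGroup C]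
    (hC0 : Nontrivial C) (hCtf : NoZeroSMulDivisors ℤ C) (hCsep : IsSeparableGroup C)
    (hext : Subsingleton (Ext1 A C)) :
    IsWhitehead A := by
  obtain ⟨e⟩ := hCsep.exists_retract_int
  exact ModuleCat.subsingleton_of_retract
    (e.map ((Ext ℤ (ModuleCat.{0} ℤ) 1).obj (Opposite.op (ModuleCat.of ℤ A))))
end

section
/- If B is a Whitehead group, then the canonical evaluation map B → B** = Hom(Hom(B, ℤ), ℤ), sending b to the homomorphism f ↦ f(b), is injective. -/
/-!
Applying `Hom(B, -)` to `0 → ℤ → ℚ → ℚ/ℤ → 0` and using `Ext¹(B, ℤ) = 0`, every character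
`χ : B → ℚ/ℤ` lifts to some `g : B → ℚ`. Lifting a character that is nonzero at a torsion element
gives a contradiction, so `B` is torsion-free; lifting a character of `B/2B` shows that every
`b` killed by all of `B* = Hom(B, ℤ)` is of the form `2y` with `y` again killed by `B*`. A nonzero
such `b` would thus start a chain `b = 2x₁, x₁ = 2x₂, …`, and any lift `g` forces
`χ(x_k) = g(b)/2^k` in `ℚ/ℤ`, with `g(b) ∈ ℤ` when `χ(b) = 0`. Since `ℚ/ℤ` is injective and the
`x_k` span a copy of `ℤ[1/2]`, there is a character with `χ(x_k) = (4^k - 1)/(3·2^k)`, whose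
`2`-adic limit `-1/3` is not an integer.
-/

open CategoryTheory

/-- The canonical evaluation map `B → B** = Hom(Hom(B, ℤ), ℤ)`, `b ↦ (f ↦ f b)`. -/
def evalHom (B : Type) [AddCommGroup B] : B →+ ((B →+ ℤ) →+ ℤ) where
  toFun b :=
    { toFun := fun f => f b
      map_zero' := rfl
      map_add' := fun f g => rfl }
  map_zero' := by ext f; simp
  map_add' := fun x y => by ext f; simp

namespace CategoryTheory

open Limits

variable {R : Type*} [Ring R] {C : Type*} [Category* C] [Abelian C] [Linear R C]
  [EnoughProjectives C]

lemma ProjectiveResolution.exists_d_comp_eq_of_isZero_Ext_one {X Y : C}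
    (P : ProjectiveResolution X) (hXY : IsZero (((Ext R C 1).obj (Opposite.op X)).obj Y))
    (φ : P.complex.X 1 ⟶ Y) (hφ : P.complex.d 2 1 ≫ φ = 0) :
    ∃ ψ : P.complex.X 0 ⟶ Y, P.complex.d 1 0 ≫ ψ = φ := by
  have hexact : (P.complex.linearYonedaObj R Y).ExactAt 1 :=
    (HomologicalComplex.exactAt_iff_isZero_homology _ _).2 (hXY.of_iso (P.isoExt 1 Y).symm)
  rw [HomologicalComplex.exactAt_iff' _ 0 1 2 (by simp) (by simp),
    ShortComplex.moduleCat_exact_iff] at hexact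
  exact hexact φ hφ

lemma ShortComplex.ShortExact.exists_comp_g_eq_of_isZero_Ext_one {S : ShortComplex C}
    (hS : S.ShortExact) {X : C} (hX : IsZero (((Ext R C 1).obj (Opposite.op X)).obj S.X₁))
    (χ : X ⟶ S.X₃) : ∃ g : X ⟶ S.X₂, g ≫ S.g = χ := by
  -- Lift `ε ≫ χ` to `h : P₀ ⟶ S.X₂`; the failure of `h` to descend along `ε` is a 1-cocycle
  -- `φ : P₁ ⟶ S.X₁`, hence a coboundary `d ≫ ψ`, and `h - ψ ≫ S.f` descends.
  have := hS.mono_f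
  have := hS.epi_g
  let P := ProjectiveResolution.of X
  let ε : P.complex.X 0 ⟶ X := P.π.f 0
  have hε : P.complex.d 1 0 ≫ ε = 0 := P.complex_d_comp_π_f_zero
  have : Epi ε := inferInstanceAs (Epi (P.π.f 0))
  let h := Projective.factorThru (ε ≫ χ) S.g
  have hh : h ≫ S.g = ε ≫ χ := Projective.factorThru_comp _ _
  have hdh : (P.complex.d 1 0 ≫ h) ≫ S.g = 0 := by
    rw [Category.assoc, hh, ← Category.assoc, hε, zero_comp]
  let φ := hS.exact.lift (P.complex.d 1 0 ≫ h) hdh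
  have hφ : φ ≫ S.f = P.complex.d 1 0 ≫ h := hS.exact.lift_f _ _
  obtain ⟨ψ, hψ⟩ := P.exists_d_comp_eq_of_isZero_Ext_one hX φ (by
    rw [← cancel_mono S.f, Category.assoc, hφ, ← Category.assoc, HomologicalComplex.d_comp_d,
      zero_comp, zero_comp])
  have hd : P.complex.d 1 0 ≫ (h - ψ ≫ S.f) = 0 := by
    rw [Preadditive.comp_sub, ← Category.assoc, hψ, hφ, sub_self]
  obtain ⟨g, hg⟩ : ∃ g : X ⟶ S.X₂, ε ≫ g = h - ψ ≫ S.f := ⟨_, P.exact₀.g_desc _ hd⟩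
  refine ⟨g, ?_⟩
  rw [← cancel_epi ε, ← Category.assoc, hg, Preadditive.sub_comp, Category.assoc,
    S.zero, comp_zero, sub_zero, hh]

end CategoryTheory

noncomputable def intRatCircle : ShortComplex (ModuleCat.{0} ℤ) :=
  ShortComplex.mk (ModuleCat.ofHom (Int.castAddHom ℚ).toIntLinearMap)
    (ModuleCat.ofHom (QuotientAddGroup.mk' (AddSubgroup.zmultiples (1 : ℚ))).toIntLinearMap)
    (by ext; simp)

lemma intRatCircle_shortExact : intRatCircle.ShortExact where
  exact := by
    rw [ShortComplex.moduleCat_exact_iff]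
    intro (q : ℚ) hq
    obtain ⟨n, hn⟩ := (AddCircle.coe_eq_zero_iff (1 : ℚ)).1 hq
    exact ⟨n, (by simpa using hn : (n : ℚ) = q)⟩
  mono_f := (ModuleCat.mono_iff_injective _).2 (Int.cast_injective (α := ℚ))
  epi_g := (ModuleCat.epi_iff_surjective _).2 QuotientAddGroup.mk_surjective

def CharactersLiftToRat (B : Type*) [AddCommGroup B] : Prop :=
  ∀ χ : CharacterModule B, ∃ g : B →+ ℚ, ∀ x, (g x : AddCircle (1 : ℚ)) = χ x

theorem IsWhitehead.charactersLiftToRat {B : Type} [AddCommGroup B] (hB : IsWhitehead B) :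
    CharactersLiftToRat B := by
  intro χ
  obtain ⟨g, hg⟩ := intRatCircle_shortExact.exists_comp_g_eq_of_isZero_Ext_one (R := ℤ)
    (X := ModuleCat.of ℤ B) (@ModuleCat.isZero_of_subsingleton _ _ _ hB)
    (ModuleCat.ofHom χ.toIntLinearMap)
  exact ⟨g.hom.toAddMonoidHom, fun x => congr($hg x)⟩

lemma AddCircle.coe_eq_zero_iff_exists_intCast {q : ℚ} :
    (q : AddCircle (1 : ℚ)) = 0 ↔ ∃ n : ℤ, (n : ℚ) = q := by
  simp [AddSubgroup.mem_zmultiples_iff]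

lemma AddMonoidHom.exists_intCast_eq {B : Type*} [AddCommGroup B] (g : B →+ ℚ)
    (hg : ∀ x, ∃ n : ℤ, (n : ℚ) = g x) : ∃ f : B →+ ℤ, ∀ x, (f x : ℚ) = g x := by
  have hinj : Function.Injective (Int.castAddHom ℚ) := Int.cast_injective
  exact ⟨(AddMonoidHom.ofInjective hinj).symm.toAddMonoidHom.comp (g.codRestrict _ hg),
    fun x => AddMonoidHom.apply_ofInjective_symm hinj ⟨g x, hg x⟩⟩

lemma mem_ker_evalHom {B : Type} [AddCommGroup B] {b : B} :
    b ∈ (evalHom B).ker ↔ ∀ f : B →+ ℤ, f b = 0 := by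
  rw [AddMonoidHom.mem_ker, DFunLike.ext_iff]
  rfl

namespace CharactersLiftToRat

lemma isAddTorsionFree {B : Type*} [AddCommGroup B] (hB : CharactersLiftToRat B) :
    IsAddTorsionFree B := by
  refine ⟨fun n hn a b hab => sub_eq_zero.1 ?_⟩
  by_contra hne
  obtain ⟨χ, hχ⟩ := CharacterModule.exists_character_apply_ne_zero_of_ne_zero hne
  obtain ⟨g, hg⟩ := hB χ
  have hgab : g (a - b) = 0 := by
    have : n • g (a - b) = 0 := by
      rw [← map_nsmul, nsmul_sub, sub_eq_zero.2 hab, map_zero]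
    simpa [hn] using this
  exact hχ (by rw [← hg, hgab, QuotientAddGroup.mk_zero])

lemma exists_zsmul_eq_of_mem_ker_evalHom {B : Type} [AddCommGroup B]
    (hB : CharactersLiftToRat B) {b : B} (hb : b ∈ (evalHom B).ker) {n : ℤ} (hn : n ≠ 0) :
    ∃ y ∈ (evalHom B).ker, n • y = b := by
  rw [mem_ker_evalHom] at hb
  obtain ⟨y, rfl⟩ : b ∈ (zsmulAddGroupHom n : B →+ B).range := by
    by_contra hbn
    obtain ⟨χ, hχ⟩ := CharacterModule.exists_character_apply_ne_zero_of_ne_zero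
      (mt (QuotientAddGroup.eq_zero_iff b).1 hbn)
    obtain ⟨g, hg⟩ := hB ((χ : B ⧸ _ →+ AddCircle (1 : ℚ)).comp (QuotientAddGroup.mk' _))
    replace hg : ∀ x, (g x : AddCircle (1 : ℚ)) = χ x := hg
    obtain ⟨f, hf⟩ := (n • g).exists_intCast_eq fun x => by
      rw [← AddCircle.coe_eq_zero_iff_exists_intCast]
      have : ((n • x : B) : B ⧸ (zsmulAddGroupHom n).range) = 0 :=
        (QuotientAddGroup.eq_zero_iff _).2 ⟨x, rfl⟩
      calc (((n • g) x : ℚ) : AddCircle (1 : ℚ)) = n • (g x : AddCircle (1 : ℚ)) := by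
            rw [AddMonoidHom.smul_apply, QuotientAddGroup.mk_zsmul]
        _ = χ ((n • x : B) : B ⧸ (zsmulAddGroupHom n).range) := by
            rw [hg, ← map_zsmul, QuotientAddGroup.mk_zsmul]
        _ = 0 := by rw [this, map_zero]
    have hgb : g b = 0 := by
      have := hf b; rw [hb f] at this; simpa [hn] using this.symm
    exact hχ (by rw [← hg, hgb, QuotientAddGroup.mk_zero])
  refine ⟨y, mem_ker_evalHom.2 fun f => ?_, rfl⟩
  simpa [hn] using hb f

end CharactersLiftToRat

section Halving

variable {A : Type*} [AddCommGroup A] {y : ℕ → A}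

lemma two_pow_smul_of_halving (hy : ∀ k, (2 : ℤ) • y (k + 1) = y k) (k i : ℕ) :
    (2 : ℤ) ^ i • y (k + i) = y k := by
  induction i with
  | zero => simp
  | succ i ih => rw [← ih, ← hy (k + i), smul_smul, ← pow_succ, add_assoc]

lemma linearCombination_eq_smul_of_halving (hy : ∀ k, (2 : ℤ) • y (k + 1) = y k)
    (c : ℕ →₀ ℤ) {l : ℕ} (hl : ∀ k ∈ c.support, k ≤ l) :
    Finsupp.linearCombination ℤ y c = (c.sum fun k n => n * 2 ^ (l - k)) • y l := by
  rw [Finsupp.linearCombination_apply, Finsupp.sum, Finsupp.sum, Finset.sum_smul]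
  refine Finset.sum_congr rfl fun k hk => ?_
  rw [mul_smul, ← two_pow_smul_of_halving hy k (l - k), Nat.add_sub_cancel' (hl k hk)]

end Halving

def negThirdCircle (k : ℕ) : AddCircle (1 : ℚ) := (((4 : ℚ) ^ k - 1) / (3 * 2 ^ k) : ℚ)

lemma negThirdCircle_halving (k : ℕ) : (2 : ℤ) • negThirdCircle (k + 1) = negThirdCircle k := by
  rw [← sub_eq_zero, negThirdCircle, negThirdCircle, ← QuotientAddGroup.mk_zsmul,
    ← QuotientAddGroup.mk_sub, AddCircle.coe_eq_zero_iff_exists_intCast]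
  have h4 : (4 : ℚ) ^ k = 2 ^ k * 2 ^ k := by rw [← mul_pow]; norm_num
  exact ⟨2 ^ k, by rw [zsmul_eq_mul, pow_succ 4, h4]; push_cast; field_simp; ring⟩

lemma not_exists_rat_div_pow_eq_negThirdCircle :
    ¬ ∃ q : ℚ, ∀ k, ((q / 2 ^ k : ℚ) : AddCircle (1 : ℚ)) = negThirdCircle k := by
  rintro ⟨q, hq⟩
  obtain ⟨w, rfl⟩ : ∃ w : ℤ, (w : ℚ) = q := by
    rw [← AddCircle.coe_eq_zero_iff_exists_intCast]
    simpa [negThirdCircle] using hq 0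
  have hdvd : ∀ k, (2 : ℤ) ^ k ∣ 3 * w + 1 := fun k => by
    obtain ⟨m, hm⟩ := AddCircle.coe_eq_zero_iff_exists_intCast.1
      (by rw [QuotientAddGroup.mk_sub, hq k, negThirdCircle, sub_self] :
        ((w / 2 ^ k - ((4 : ℚ) ^ k - 1) / (3 * 2 ^ k) : ℚ) : AddCircle (1 : ℚ)) = 0)
    refine ⟨3 * m + 2 ^ k, ?_⟩
    have : (3 * w + 1 : ℚ) = 2 ^ k * (3 * m + 2 ^ k) := by
      rw [hm, show (4 : ℚ) ^ k = 2 ^ k * 2 ^ k by rw [← mul_pow]; norm_num]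
      field_simp
      ring
    exact_mod_cast this
  obtain ⟨k, hk⟩ :=
    (Int.finiteMultiplicity_iff (a := 2) (b := 3 * w + 1)).2 ⟨by norm_num, by omega⟩
  exact hk (hdvd (k + 1))

lemma CharacterModule.exists_comp_eq_of_ker_le {F B : Type*} [AddCommGroup F] [AddCommGroup B]
    (Φ : F →ₗ[ℤ] B) (Ψ : F →ₗ[ℤ] AddCircle (1 : ℚ)) (h : LinearMap.ker Φ ≤ LinearMap.ker Ψ) :
    ∃ χ : CharacterModule B, ∀ c, χ (Φ c) = Ψ c := by
  let Ψ' : LinearMap.range Φ →ₗ[ℤ] AddCircle (1 : ℚ) :=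
    (LinearMap.ker Φ).liftQ Ψ h ∘ₗ Φ.quotKerEquivRange.symm.toLinearMap
  obtain ⟨χ, hχ⟩ := CharacterModule.dual_surjective_of_injective (LinearMap.range Φ).subtype
    Subtype.val_injective Ψ'.toAddMonoidHom
  refine ⟨χ, fun c => ?_⟩
  calc χ (Φ c) = Ψ' ⟨Φ c, LinearMap.mem_range_self Φ c⟩ :=
      DFunLike.congr_fun hχ ⟨Φ c, LinearMap.mem_range_self Φ c⟩
    _ = Ψ c := by simp [Ψ', LinearMap.quotKerEquivRange_symm_apply_image]

lemma CharactersLiftToRat.eq_zero_of_halving {B : Type*} [AddCommGroup B]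
    (hB : CharactersLiftToRat B) {x : ℕ → B} (hx : ∀ k, (2 : ℤ) • x (k + 1) = x k) : x 0 = 0 := by
  have := hB.isAddTorsionFree
  by_contra hx0
  have hxne : ∀ l, x l ≠ 0 := fun l hl =>
    hx0 (by rw [← two_pow_smul_of_halving hx 0 l, zero_add, hl, smul_zero])
  obtain ⟨χ, hχ⟩ := CharacterModule.exists_comp_eq_of_ker_le (Finsupp.linearCombination ℤ x)
    (Finsupp.linearCombination ℤ negThirdCircle) fun c hc => by
      obtain ⟨l, hl⟩ : ∃ l, ∀ k ∈ c.support, k ≤ l :=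
        ⟨c.support.sup id, fun k hk => Finset.le_sup (f := id) hk⟩
      rw [LinearMap.mem_ker, linearCombination_eq_smul_of_halving hx c hl,
        IsAddTorsionFree.zsmul_eq_zero_iff_left (hxne l)] at hc
      rw [LinearMap.mem_ker, linearCombination_eq_smul_of_halving negThirdCircle_halving c hl, hc,
        zero_smul]
  obtain ⟨g, hg⟩ := hB χ
  refine not_exists_rat_div_pow_eq_negThirdCircle ⟨g (x 0), fun k => ?_⟩
  have hgk : g (x 0) / 2 ^ k = g (x k) := by
    rw [← two_pow_smul_of_halving hx 0 k, zero_add, map_zsmul, zsmul_eq_mul]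
    push_cast
    field_simp
  rw [hgk, hg]
  simpa using hχ (Finsupp.single k 1)

lemma exists_halving_seq {A : Type*} [AddCommGroup A] {S : Set A}
    (hS : ∀ c ∈ S, ∃ y ∈ S, (2 : ℤ) • y = c) {b : A} (hb : b ∈ S) :
    ∃ x : ℕ → A, x 0 = b ∧ ∀ k, (2 : ℤ) • x (k + 1) = x k := by
  choose! f hfS hf using hS
  have hiter : ∀ k, f^[k] b ∈ S := fun k => by
    induction k with
    | zero => exact hb
    | succ k ih => rw [Function.iterate_succ_apply']; exact hfS _ ih
  exact ⟨fun k => f^[k] b, rfl, fun k => by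
    simp only [Function.iterate_succ_apply']; exact hf _ (hiter k)⟩

/-- If `B` is a Whitehead group, the canonical map `B → B**` is injective. -/
theorem whitehead_eval_injective (B : Type) [AddCommGroup B] (hB : IsWhitehead B) :
    Function.Injective (evalHom B) := by
  have hlift := hB.charactersLiftToRat
  refine (injective_iff_map_eq_zero _).2 fun b hb => ?_
  obtain ⟨x, rfl, hx⟩ := exists_halving_seq (S := ((evalHom B).ker : Set B))
    (fun c hc => hlift.exists_zsmul_eq_of_mem_ker_evalHom hc two_ne_zero)
    (AddMonoidHom.mem_ker.2 hb)
  exact hlift.eq_zero_of_halving hx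
end

section
/- Let A and B be free abelian groups, and let A' ≤ A and B' ≤ B be subgroups such that both quotients A/A' and B/B' are free abelian groups. Then the quotient of A ⊗ B by the image of the natural map A' ⊗ B' → A ⊗ B (induced by the inclusions) is a free abelian group. -/
/-!
Since `A ⧸ A'` and `B ⧸ B'` are free, hence projective, the inclusions `A' → A` and `B' → B`
have left inverses `r` and `s`. Then `r ⊗ s` is a left inverse of `A' ⊗ B' → A ⊗ B`, so the
image of this map is a direct summand of `A ⊗ B`, and the quotient is isomorphic to the complement
`ker (r ⊗ s)`. That is a subgroup of the free group `A ⊗ B`, hence free.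

Submodules of free modules over a PID are free also in infinite rank: well-order the basis `ι`
of `ι →₀ R` and, for each `i`, pick a vector of `N` supported on `Iic i` whose `i`-th
coordinate generates the ideal of all such coordinates. Those with nonzero `i`-th coordinate form
a basis of `N`: they span by well-founded induction on `i`, and are independent because the family
is triangular.
-/

open scoped TensorProduct

open Set Finsupp Submodule Submodule.IsPrincipal

section Triangular

variable {R ι : Type*} [LinearOrder ι]

theorem Finsupp.exists_mem_supported_Iic [Semiring R] {s : Set ι} {z : ι →₀ R}
    (hz : z ∈ supported R R s) (hz0 : z ≠ 0) : ∃ m ∈ s, z ∈ supported R R (Iic m) := by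
  have hne : z.support.Nonempty := support_nonempty_iff.mpr hz0
  exact ⟨z.support.max' hne, hz (z.support.max'_mem hne), fun j hj => z.support.le_max' j hj⟩

theorem Finsupp.linearIndependent_of_triangular [Ring R] [NoZeroDivisors R] {κ : Type*}
    [LinearOrder κ] {f : κ → ι} (hf : StrictMono f) {v : κ → ι →₀ R}
    (hv : ∀ k, v k ∈ supported R R (Iic (f k))) (hdiag : ∀ k, v k (f k) ≠ 0) :
    LinearIndependent R v := by
  classical
  rw [linearIndependent_iff']
  intro s
  induction s using Finset.induction_on_max with
  | empty => simp
  | insert a s hlt ih =>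
    intro g hg
    have hvanish : ∀ k ∈ s, v k (f a) = 0 := fun k hk =>
      notMem_support_iff.mp fun h => (hf (hlt k hk)).not_ge (hv k h)
    have has : a ∉ s := fun h => (hlt a h).false
    rw [Finset.sum_insert has] at hg
    have hga : g a = 0 := by
      have := congrArg (· (f a)) hg
      simp only [coe_add, Pi.add_apply, coe_smul, Pi.smul_apply, smul_eq_mul, finsetSum_apply,
        coe_zero, Pi.zero_apply] at this
      rw [Finset.sum_eq_zero fun k hk => by rw [hvanish k hk, mul_zero], add_zero] at this
      exact (mul_eq_zero.mp this).resolve_right (hdiag a)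
    rw [hga, zero_smul, zero_add] at hg
    intro k hk
    rcases Finset.mem_insert.mp hk with rfl | hk
    · exact hga
    · exact ih g hg k hk

end Triangular

namespace Submodule

variable {R ι : Type*} [CommRing R] [IsPrincipalIdealRing R] [LinearOrder ι]
  (N : Submodule R (ι →₀ R))

noncomputable def leadingCoeffIdeal (i : ι) : Ideal R :=
  (N ⊓ supported R R (Iic i)).map (lapply i)

theorem exists_mem_apply_eq_generator_leadingCoeffIdeal (i : ι) :
    ∃ x ∈ N ⊓ supported R R (Iic i), x i = generator (N.leadingCoeffIdeal i) :=
  mem_map.mp (generator_mem (N.leadingCoeffIdeal i))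

noncomputable def echelonVector (i : ι) : ι →₀ R :=
  (N.exists_mem_apply_eq_generator_leadingCoeffIdeal i).choose

theorem echelonVector_mem (i : ι) : N.echelonVector i ∈ N ⊓ supported R R (Iic i) :=
  (N.exists_mem_apply_eq_generator_leadingCoeffIdeal i).choose_spec.1

theorem echelonVector_apply_self (i : ι) :
    N.echelonVector i i = generator (N.leadingCoeffIdeal i) :=
  (N.exists_mem_apply_eq_generator_leadingCoeffIdeal i).choose_spec.2

def pivots : Set ι := {i | generator (N.leadingCoeffIdeal i) ≠ 0}

theorem generator_leadingCoeffIdeal_dvd {i : ι} {z : ι →₀ R}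
    (hz : z ∈ N ⊓ supported R R (Iic i)) : generator (N.leadingCoeffIdeal i) ∣ z i :=
  (mem_iff_generator_dvd _).mp (mem_map_of_mem hz)

theorem mem_span_echelonVector [WellFoundedLT ι] {z : ι →₀ R} (hz : z ∈ N) :
    z ∈ span R (range fun i : N.pivots => N.echelonVector i) := by
  set K := span R (range fun i : N.pivots => N.echelonVector i)
  suffices h : ∀ i, ∀ z ∈ N ⊓ supported R R (Iic i), z ∈ K by
    rcases eq_or_ne z 0 with rfl | hz0
    · exact zero_mem K
    obtain ⟨i, -, hi⟩ := exists_mem_supported_Iic (s := univ) (by simp) hz0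
    exact h i z ⟨hz, hi⟩
  intro i
  induction i using WellFoundedLT.induction with
  | _ i ih =>
    have below : ∀ y ∈ N ⊓ supported R R (Iic i), y i = 0 → y ∈ K := by
      intro y hy hyi
      rcases eq_or_ne y 0 with rfl | hy0
      · exact zero_mem K
      have hIio : y ∈ supported R R (Iio i) := fun j hj =>
        lt_of_le_of_ne (hy.2 hj) (by rintro rfl; exact (mem_support_iff.mp hj) hyi)
      obtain ⟨m, hmi, hm⟩ := exists_mem_supported_Iic hIio hy0
      exact ih m hmi y ⟨hy.1, hm⟩
    intro z hz
    obtain ⟨a, ha⟩ := N.generator_leadingCoeffIdeal_dvd hz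
    by_cases hc : generator (N.leadingCoeffIdeal i) = 0
    · exact below z hz (by rw [ha, hc, zero_mul])
    · have hxK : N.echelonVector i ∈ K := subset_span ⟨⟨i, hc⟩, rfl⟩
      have hy := below (z - a • N.echelonVector i)
        (sub_mem hz (smul_mem _ a (N.echelonVector_mem i)))
        (by simp [N.echelonVector_apply_self, ha, mul_comm])
      simpa using add_mem hy (smul_mem K a hxK)

theorem linearIndependent_echelonVector [IsDomain R] :
    LinearIndependent R fun i : N.pivots => N.echelonVector i :=
  linearIndependent_of_triangular (Subtype.strictMono_coe _) (fun i => (N.echelonVector_mem i).2)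
    fun i => by rw [echelonVector_apply_self]; exact i.2

theorem free_of_wellFoundedLT [IsDomain R] [WellFoundedLT ι] : Module.Free R N := by
  have hspan : span R (range fun i : N.pivots => N.echelonVector i) = N :=
    le_antisymm (span_le.mpr (range_subset_iff.mpr fun i => (N.echelonVector_mem i).1))
      fun z hz => N.mem_span_echelonVector hz
  exact Module.Free.of_basis
    ((Module.Basis.span N.linearIndependent_echelonVector).map (LinearEquiv.ofEq _ _ hspan))

end Submodule

theorem Submodule.free_of_isPrincipalIdealRing {R M : Type*} [CommRing R] [IsDomain R]
    [IsPrincipalIdealRing R] [AddCommGroup M] [Module R M] [Module.Free R M]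
    (p : Submodule R M) : Module.Free R p := by
  let b := Module.Free.chooseBasis R M
  let : LinearOrder (Module.Free.ChooseBasisIndex R M) := IsWellOrder.linearOrder WellOrderingRel
  have : WellFoundedLT (Module.Free.ChooseBasisIndex R M) :=
    inferInstanceAs (IsWellFounded _ WellOrderingRel)
  have := (p.map b.repr.toLinearMap).free_of_wellFoundedLT
  exact Module.Free.of_equiv (p.equivMapOfInjective _ b.repr.injective).symm

section Splitting

variable {R M N : Type*} [Ring R] [AddCommGroup M] [Module R M] [AddCommGroup N] [Module R N]

theorem Submodule.exists_leftInverse_subtype (p : Submodule R M) [Module.Projective R (M ⧸ p)] :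
    ∃ r : M →ₗ[R] p, r ∘ₗ p.subtype = LinearMap.id := by
  obtain ⟨l, hl⟩ := p.mkQ.exists_rightInverse_of_surjective p.range_mkQ
  have hexact := LinearMap.exact_subtype_mkQ p
  exact ⟨_, ((hexact.splitInjectiveEquiv p.mkQ_surjective).symm
    (hexact.splitSurjectiveEquiv p.injective_subtype ⟨l, hl⟩)).2⟩

theorem LinearMap.isCompl_range_ker_of_leftInverse {f : M →ₗ[R] N} {g : N →ₗ[R] M}
    (h : g ∘ₗ f = LinearMap.id) : IsCompl (range f) (ker g) := by
  have hidem : IsIdempotentElem (f ∘ₗ g) := by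
    rw [IsIdempotentElem, Module.End.mul_eq_comp, comp_assoc, ← comp_assoc g f g, h, id_comp]
  have hg : range g = ⊤ := range_eq_top.mpr fun x => ⟨f x, congr($h x)⟩
  have hf : ker f = ⊥ := ker_eq_bot_of_inverse h
  simpa only [range_comp_of_range_eq_top f hg, ker_comp_of_ker_eq_bot g hf] using
    IsIdempotentElem.isCompl hidem

end Splitting

theorem TensorProduct.free_quotient_range_map_subtype {R M N : Type*} [CommRing R] [IsDomain R]
    [IsPrincipalIdealRing R] [AddCommGroup M] [Module R M] [AddCommGroup N] [Module R N]
    [Module.Free R M] [Module.Free R N] (p : Submodule R M) (q : Submodule R N)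
    [Module.Projective R (M ⧸ p)] [Module.Projective R (N ⧸ q)] :
    Module.Free R ((M ⊗[R] N) ⧸ LinearMap.range (map p.subtype q.subtype)) := by
  obtain ⟨r, hr⟩ := p.exists_leftInverse_subtype
  obtain ⟨r', hr'⟩ := q.exists_leftInverse_subtype
  have hleft : map r r' ∘ₗ map p.subtype q.subtype = LinearMap.id := by
    rw [← map_comp, hr, hr', map_id]
  have := (LinearMap.ker (map r r')).free_of_isPrincipalIdealRing
  exact Module.Free.of_equiv
    (quotientEquivOfIsCompl _ _ (LinearMap.isCompl_range_ker_of_leftInverse hleft)).symm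

/-- If `A` and `B` are free abelian groups and `A' ≤ A`, `B' ≤ B` are subgroups with
`A/A'` and `B/B'` free, then the quotient of `A ⊗ B` by the image of the natural map
`A' ⊗ B' → A ⊗ B` is a free abelian group. -/
theorem tensor_quotient_free (A B : Type) [AddCommGroup A] [AddCommGroup B]
    [Module.Free ℤ A] [Module.Free ℤ B]
    (A' : AddSubgroup A) (B' : AddSubgroup B)
    (hA : Module.Free ℤ (A ⧸ A')) (hB : Module.Free ℤ (B ⧸ B')) :
    Module.Free ℤ
      ((A ⊗[ℤ] B) ⧸
        LinearMap.range
          (TensorProduct.map A'.subtype.toIntLinearMap B'.subtype.toIntLinearMap)) := by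
  have : Module.Free ℤ (A ⧸ A'.toIntSubmodule) := hA
  have : Module.Free ℤ (B ⧸ B'.toIntSubmodule) := hB
  exact TensorProduct.free_quotient_range_map_subtype A'.toIntSubmodule B'.toIntSubmodule
end
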